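/- Let r ≥ 2. Then for all k, l ∈ {1, …, r}: E[((6/(r(r+1)))·(ρ(k) − ρ(l))² − 1)²] ≤ 7/5. -/

import Mathlib

open MeasureTheory Finset Real

noncomputable section

instance instMSPerm (r : ℕ) : MeasurableSpace (Equiv.Perm (Fin r)) := ⊤

/-- The law of a single uniformly random permutation of `{1, …, r}`. -/
def permMeasure (r : ℕ) : Measure (Equiv.Perm (Fin r)) :=
  (PMF.uniformOfFintype (Equiv.Perm (Fin r))).toMeasure

/-- `ρ(j) = π(j) - (r+1)/2`, where `π(j) ∈ {1, …, r}` (a permutation of `Fin r` assigns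
values in `{0, …, r-1}`, hence the `+ 1`). -/
def rho1 (r : ℕ) (j : Fin r) (g : Equiv.Perm (Fin r)) : ℝ :=
  ((g j : ℕ) : ℝ) + 1 - ((r : ℝ) + 1) / 2

end

/-! Since `Equiv.Perm α` acts 2-transitively on `α`, for `k ≠ l` the pair `(π k, π l)` is
uniformly distributed over the ordered pairs of distinct points. The expectation is therefore
an average of `(c (i - j)² - 1)²`, `c = 6/(r(r + 1))`, over `i ≠ j` in `{0, …, r-1}`, and the
moments `∑ᵢ ∑ⱼ (i - j)² = r²(r² - 1)/6` and `∑ᵢ ∑ⱼ (i - j)⁴ = r²(r² - 1)(2r² - 3)/30` evaluate it to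
`6(2r² - 3)/(5r(r + 1)) - 1 < 7/5`. For `k = l` the integrand is identically `1`. -/

namespace Equiv.Perm

variable {α β : Type*} [Fintype α] [AddCommMonoid β]

theorem sum_offDiag_apply_apply (F : α → α → β) (g : Perm α) :
    ∑ p ∈ (univ : Finset α).offDiag, F (g p.1) (g p.2) =
      ∑ p ∈ (univ : Finset α).offDiag, F p.1 p.2 :=
  Finset.sum_equiv (g.prodCongr g) (by simp [g.injective.ne_iff]) (by simp)

variable [DecidableEq α]

theorem sum_apply_apply_eq_of_ne (F : α → α → β) {a b c d : α} (hab : a ≠ b)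
    (hcd : c ≠ d) :
    ∑ g : Perm α, F (g a) (g b) = ∑ g : Perm α, F (g c) (g d) := by
  obtain ⟨σ, hσc, hσd⟩ :=
    MulAction.is_two_pretransitive_iff.mp (isMultiplyPretransitive α 2) hcd hab
  rw [Perm.smul_def] at hσc hσd
  exact Fintype.sum_equiv (Equiv.mulRight σ) _ _ fun g => by simp [hσc, hσd]

theorem card_offDiag_smul_sum_apply_apply (F : α → α → β) {a b : α} (hab : a ≠ b) :
    #(univ : Finset α).offDiag • ∑ g : Perm α, F (g a) (g b) =
      Fintype.card (Perm α) • ∑ p ∈ (univ : Finset α).offDiag, F p.1 p.2 := by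
  calc #(univ : Finset α).offDiag • ∑ g : Perm α, F (g a) (g b)
      = ∑ p ∈ (univ : Finset α).offDiag, ∑ g : Perm α, F (g p.1) (g p.2) := by
        rw [← sum_const]
        exact sum_congr rfl fun p hp =>
          sum_apply_apply_eq_of_ne F hab (mem_offDiag.mp hp).2.2
    _ = ∑ g : Perm α, ∑ p ∈ (univ : Finset α).offDiag, F p.1 p.2 := by
        rw [sum_comm]
        exact sum_congr rfl fun g _ => sum_offDiag_apply_apply F g
    _ = Fintype.card (Perm α) • ∑ p ∈ (univ : Finset α).offDiag, F p.1 p.2 := by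
        rw [sum_const, card_univ]

theorem integral_uniformOfFintype_apply_apply [MeasurableSpace (Perm α)]
    [MeasurableSingletonClass (Perm α)] (F : α → α → ℝ) {a b : α} (hab : a ≠ b) :
    ∫ g, F (g a) (g b) ∂(PMF.uniformOfFintype (Perm α)).toMeasure =
      (∑ p ∈ (univ : Finset α).offDiag, F p.1 p.2) / #(univ : Finset α).offDiag := by
  have hcard := card_offDiag_smul_sum_apply_apply F hab
  have hoff : (#(univ : Finset α).offDiag : ℝ) ≠ 0 := by
    exact_mod_cast (card_pos.mpr ⟨(a, b), by simp [hab]⟩).ne'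
  simp only [nsmul_eq_mul] at hcard
  rw [PMF.integral_eq_sum, eq_div_iff hoff]
  simp only [PMF.uniformOfFintype_apply, ENNReal.toReal_inv, ENNReal.toReal_natCast, smul_eq_mul,
    ← mul_sum]
  field_simp
  linarith

end Equiv.Perm

theorem sum_range_succ_natCast_sub_pow (p n : ℕ) :
    ∑ j ∈ range (n + 1), ((n : ℝ) + 1 - j) ^ p =
      ∑ j ∈ range n, ((n : ℝ) - j) ^ p + ((n : ℝ) + 1) ^ p := by
  rw [sum_range_succ']
  push_cast
  simp only [add_sub_add_right_eq_sub, sub_zero]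

theorem sum_range_natCast_sub_sq (n : ℕ) :
    ∑ j ∈ range n, ((n : ℝ) - j) ^ 2 = n * (n + 1) * (2 * n + 1) / 6 := by
  induction n with
  | zero => simp
  | succ n ih => push_cast; rw [sum_range_succ_natCast_sub_pow, ih]; ring

theorem sum_range_natCast_sub_pow_four (n : ℕ) :
    ∑ j ∈ range n, ((n : ℝ) - j) ^ 4 =
      n * (n + 1) * (2 * n + 1) * (3 * n ^ 2 + 3 * n - 1) / 30 := by
  induction n with
  | zero => simp
  | succ n ih => push_cast; rw [sum_range_succ_natCast_sub_pow, ih]; ring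

theorem sum_range_succ_sum_range_succ_sub_pow {p : ℕ} (hp : Even p) (hp₀ : p ≠ 0) (n : ℕ) :
    ∑ i ∈ range (n + 1), ∑ j ∈ range (n + 1), ((i : ℝ) - j) ^ p =
      ∑ i ∈ range n, ∑ j ∈ range n, ((i : ℝ) - j) ^ p +
        2 * ∑ j ∈ range n, ((n : ℝ) - j) ^ p := by
  have hrefl : ∀ i : ℕ, ((i : ℝ) - n) ^ p = ((n : ℝ) - i) ^ p := fun i => by
    rw [← neg_sub, hp.neg_pow]
  simp only [sum_range_succ, sum_add_distrib, sub_self, zero_pow hp₀, hrefl]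
  ring

theorem sum_range_sum_range_sub_sq (n : ℕ) :
    ∑ i ∈ range n, ∑ j ∈ range n, ((i : ℝ) - j) ^ 2 = n ^ 2 * (n ^ 2 - 1) / 6 := by
  induction n with
  | zero => simp
  | succ n ih =>
    rw [sum_range_succ_sum_range_succ_sub_pow even_two two_ne_zero, ih, sum_range_natCast_sub_sq]
    push_cast
    ring

theorem sum_range_sum_range_sub_pow_four (n : ℕ) :
    ∑ i ∈ range n, ∑ j ∈ range n, ((i : ℝ) - j) ^ 4 =
      n ^ 2 * (n ^ 2 - 1) * (2 * n ^ 2 - 3) / 30 := by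
  induction n with
  | zero => simp
  | succ n ih =>
    rw [sum_range_succ_sum_range_succ_sub_pow (by decide) four_ne_zero, ih,
      sum_range_natCast_sub_pow_four]
    push_cast
    ring

theorem sum_offDiag_fin_natCast_sub (n : ℕ) (G : ℝ → ℝ) :
    ∑ p ∈ (univ : Finset (Fin n)).offDiag, G (((p.1 : ℕ) : ℝ) - (p.2 : ℕ)) =
      ∑ i ∈ range n, ∑ j ∈ range n, G ((i : ℝ) - j) - n * G 0 := by
  rw [← product_sdiff_diag, univ_product_univ, sum_sdiff_eq_sub (subset_univ _),
    ← univ_product_univ, sum_product, sum_diag]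
  simp only [sub_self, sum_const, card_univ, Fintype.card_fin, nsmul_eq_mul]
  rw [← Fin.sum_univ_eq_sum_range]
  exact congrArg (· - _)
    (sum_congr rfl fun i _ => Fin.sum_univ_eq_sum_range (fun j => G ((i : ℕ) - j)) n)

theorem sum_range_sum_range_sq_mul_sub_sq_sub_one (n : ℕ) (c : ℝ) :
    ∑ i ∈ range n, ∑ j ∈ range n, (c * ((i : ℝ) - j) ^ 2 - 1) ^ 2 =
      c ^ 2 * (n ^ 2 * (n ^ 2 - 1) * (2 * n ^ 2 - 3) / 30) - 2 * c * (n ^ 2 * (n ^ 2 - 1) / 6) +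
        n ^ 2 := by
  have hexpand : ∀ x : ℝ, (c * x ^ 2 - 1) ^ 2 = c ^ 2 * x ^ 4 - 2 * c * x ^ 2 + 1 := fun x => by
    ring
  simp only [hexpand, sum_add_distrib, sum_sub_distrib, ← mul_sum, sum_const, card_range,
    sum_range_sum_range_sub_sq, sum_range_sum_range_sub_pow_four, nsmul_eq_mul]
  ring

instance (r : ℕ) : MeasurableSingletonClass (Equiv.Perm (Fin r)) :=
  ⟨fun _ => MeasurableSpace.measurableSet_top⟩

theorem rho1_sub_rho1 (r : ℕ) (k l : Fin r) (g : Equiv.Perm (Fin r)) :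
    rho1 r k g - rho1 r l g = ((g k : ℕ) : ℝ) - (g l : ℕ) := by
  simp only [rho1]
  ring

theorem integral_rho1_moment_of_ne {r : ℕ} {k l : Fin r} (hkl : k ≠ l) :
    ∫ p, (6 / ((r : ℝ) * ((r : ℝ) + 1)) * (rho1 r k p - rho1 r l p) ^ 2 - 1) ^ 2
        ∂(permMeasure r) = 6 * (2 * (r : ℝ) ^ 2 - 3) / (5 * r * (r + 1)) - 1 := by
  set c : ℝ := 6 / ((r : ℝ) * ((r : ℝ) + 1))
  have hr : (1 : ℝ) < r := by
    have := Fin.val_ne_of_ne hkl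
    exact_mod_cast (show 1 < r by omega)
  have hr₀ : (r : ℝ) ≠ 0 := by positivity
  have hr₁ : (r : ℝ) - 1 ≠ 0 := by linarith
  have hoff : ((#(univ : Finset (Fin r)).offDiag : ℕ) : ℝ) = r * (r - 1) := by
    rw [offDiag_card, card_univ, Fintype.card_fin, Nat.cast_sub (Nat.le_mul_self r)]
    push_cast
    ring
  have hsum := sum_offDiag_fin_natCast_sub r fun x => (c * x ^ 2 - 1) ^ 2
  rw [sum_range_sum_range_sq_mul_sub_sq_sub_one] at hsum
  simp_rw [permMeasure, rho1_sub_rho1]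
  rw [Equiv.Perm.integral_uniformOfFintype_apply_apply
    (fun i j : Fin r => (c * (((i : ℕ) : ℝ) - (j : ℕ)) ^ 2 - 1) ^ 2) hkl, hsum, hoff]
  simp only [c]
  field_simp
  ring

theorem rho_difference_squared_bound_general (r : ℕ) (k l : Fin r) :
    ∫ p, (6 / ((r : ℝ) * ((r : ℝ) + 1)) * (rho1 r k p - rho1 r l p) ^ 2 - 1) ^ 2
        ∂(permMeasure r) ≤ 7 / 5 := by
  rcases eq_or_ne k l with rfl | hkl
  · simp [permMeasure]
    norm_num
  · have hr : (0 : ℝ) < r := by exact_mod_cast k.pos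
    rw [integral_rho1_moment_of_ne hkl, sub_le_iff_le_add, div_le_iff₀ (by positivity)]
    nlinarith

/-- **Lemma 3.8 (Gaunt–Reinert).** For `r ≥ 2` and all `k, l ∈ {1, …, r}`,
`E[((6/(r(r+1)))(ρ(k) − ρ(l))² − 1)²] ≤ 7/5`. -/
theorem rho_difference_squared_bound (r : ℕ) (hr : 2 ≤ r) (k l : Fin r) :
    ∫ p, (6 / ((r : ℝ) * ((r : ℝ) + 1)) * (rho1 r k p - rho1 r l p) ^ 2 - 1) ^ 2
        ∂(permMeasure r) ≤ 7 / 5 :=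
  rho_difference_squared_bound_general r k l
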